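/- arXiv:1506.05593 — 5 statements merged into one kernel-verified Lean document; each statement's English description precedes it below -/
import Mathlib

section
/- Let Re(β) ∈ (-1,0), T(x) = |x|^β, and ψ a Schwartz function. Then for every x ≠ 0, T * ψ_{1/ε}(x) → 0 as ε → 0, where ψ_{1/ε}(x) = ε ψ(εx). In fact |T * ψ_{1/ε}(x)| ≤ C ε^{-Re(β)} for a constant C depending only on ψ. -/
open MeasureTheory Filter

/-!
The substitution `u = ε y` turns `T * ψ_{1/ε}(x)` into `ε^{-β} (T * ψ)(ε x)`, since `T` is
homogeneous of degree `β`. The convolution `T * ψ` is bounded on all of `ℝ`: near the origin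
`|u|^β` is integrable (as `Re β > -1`) and `ψ` is bounded, while away from it `|u|^β ≤ 1`
(as `Re β ≤ 0`) and `ψ` is integrable. Hence `|T * ψ_{1/ε}(x)| ≤ C ε^{-Re β} → 0`.
-/

theorem norm_integral_mul_le_of_norm_le_one_off {α : Type*} [MeasurableSpace α] {μ : Measure α}
    {K g : α → ℂ} {s : Set α} {M : ℝ} (hs : MeasurableSet s) (hK : IntegrableOn K s μ)
    (hK_le : ∀ u ∉ s, ‖K u‖ ≤ 1) (hg : Integrable g μ) (hg_le : ∀ u, ‖g u‖ ≤ M) :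
    ‖∫ u, K u * g u ∂μ‖ ≤ M * ∫ u in s, ‖K u‖ ∂μ + ∫ u, ‖g u‖ ∂μ := by
  have hpointwise : ∀ u, ‖K u * g u‖ ≤ s.indicator (fun u => M * ‖K u‖) u + ‖g u‖ := by
    intro u
    rw [norm_mul]
    by_cases hu : u ∈ s
    · rw [Set.indicator_of_mem hu, mul_comm M]
      nlinarith [norm_nonneg (K u), norm_nonneg (g u), hg_le u]
    · rw [Set.indicator_of_notMem hu, zero_add]
      exact mul_le_of_le_one_left (norm_nonneg _) (hK_le u hu)
  have hdom : Integrable (fun u => s.indicator (fun u => M * ‖K u‖) u + ‖g u‖) μ :=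
    (integrable_indicator_iff hs |>.2 (hK.norm.const_mul M)).add hg.norm
  calc ‖∫ u, K u * g u ∂μ‖ ≤ ∫ u, ‖K u * g u‖ ∂μ := norm_integral_le_integral_norm _
    _ ≤ ∫ u, s.indicator (fun u => M * ‖K u‖) u + ‖g u‖ ∂μ :=
      integral_mono_of_nonneg (.of_forall fun _ => norm_nonneg _) hdom (.of_forall hpointwise)
    _ = M * ∫ u in s, ‖K u‖ ∂μ + ∫ u, ‖g u‖ ∂μ := by
      rw [integral_add (integrable_indicator_iff hs |>.2 (hK.norm.const_mul M)) hg.norm,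
        integral_indicator hs, integral_const_mul]

theorem norm_ofReal_abs_cpow_le_one {β : ℂ} (hβ : β.re ≤ 0) {u : ℝ} (hu : 1 ≤ |u|) :
    ‖((|u| : ℝ) : ℂ) ^ β‖ ≤ 1 := by
  rw [Complex.norm_cpow_eq_rpow_re_of_pos (by linarith)]
  exact Real.rpow_le_one_of_one_le_of_nonpos hu hβ

theorem locallyIntegrable_ofReal_abs_cpow {β : ℂ} (hβ : -1 < β.re) :
    LocallyIntegrable (fun u : ℝ => ((|u| : ℝ) : ℂ) ^ β) := by
  refine locallyIntegrable_of_norm_le_rpow (C := 1) (α := -β.re) (by simp) (by simp; linarith)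
    ?_ ((Complex.measurable_ofReal.comp measurable_abs).pow_const β).aestronglyMeasurable
  filter_upwards [Measure.ae_ne volume 0] with u hu
  rw [Complex.norm_cpow_eq_rpow_re_of_pos (abs_pos.mpr hu), neg_neg, one_mul, Real.norm_eq_abs]

theorem exists_bound_integral_ofReal_abs_cpow_mul_sub {β : ℂ} (hβ₁ : -1 < β.re) (hβ₂ : β.re ≤ 0)
    (ψ : SchwartzMap ℝ ℂ) :
    ∃ B > (0 : ℝ), ∀ z : ℝ, ‖∫ u : ℝ, ((|u| : ℝ) : ℂ) ^ β * ψ (z - u)‖ ≤ B := by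
  set M := SchwartzMap.seminorm ℝ 0 0 ψ
  set A := ∫ u in Metric.closedBall (0 : ℝ) 1, ‖((|u| : ℝ) : ℂ) ^ β‖
  have hM : 0 ≤ M := apply_nonneg _ _
  have hA : 0 ≤ A := setIntegral_nonneg measurableSet_closedBall fun _ _ => norm_nonneg _
  have hI : 0 ≤ ∫ u, ‖ψ u‖ := integral_nonneg fun _ => norm_nonneg _
  refine ⟨M * A + (∫ u, ‖ψ u‖) + 1, by nlinarith [mul_nonneg hM hA], fun z => ?_⟩
  have hK := (locallyIntegrable_ofReal_abs_cpow hβ₁).integrableOn_isCompact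
    (isCompact_closedBall (0 : ℝ) 1)
  have hK_le : ∀ u ∉ Metric.closedBall (0 : ℝ) 1, ‖((|u| : ℝ) : ℂ) ^ β‖ ≤ 1 := fun u hu =>
    norm_ofReal_abs_cpow_le_one hβ₂ (not_le.1 (mt mem_closedBall_zero_iff.2 hu)).le
  have h := norm_integral_mul_le_of_norm_le_one_off measurableSet_closedBall hK hK_le
    (ψ.integrable.comp_sub_left z) (fun u => SchwartzMap.norm_le_seminorm ℝ ψ (z - u))
  rw [integral_sub_left_eq_self (fun u => ‖ψ u‖) volume z] at h
  exact h.trans (le_add_of_nonneg_right zero_le_one)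

theorem integral_ofReal_abs_cpow_mul_dilation (β : ℂ) (φ : ℝ → ℂ) {ε : ℝ} (hε : 0 < ε) (x : ℝ) :
    ∫ y : ℝ, ((|y| : ℝ) : ℂ) ^ β * ((ε : ℂ) * φ (ε * (x - y)))
      = (ε : ℂ) ^ (-β) * ∫ u : ℝ, ((|u| : ℝ) : ℂ) ^ β * φ (ε * x - u) := by
  have hεβ : (ε : ℂ) ^ β ≠ 0 := by simp [hε.ne']
  have hε' : (ε : ℂ) ≠ 0 := by exact_mod_cast hε.ne'
  have hscale := Measure.integral_comp_mul_left
    (fun u : ℝ => ((|u| : ℝ) : ℂ) ^ β * φ (ε * x - u)) ε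
  rw [abs_of_pos (inv_pos.2 hε), Complex.real_smul, Complex.ofReal_inv,
    eq_inv_mul_iff_mul_eq₀ hε'] at hscale
  rw [← hscale, ← mul_assoc, ← integral_const_mul]
  refine integral_congr_ae (.of_forall fun y => ?_)
  simp only [abs_mul, abs_of_pos hε, Complex.ofReal_mul,
    Complex.mul_cpow_ofReal_nonneg hε.le (abs_nonneg y), Complex.cpow_neg, ← mul_sub]
  field_simp

/-- For `Re β ∈ (-1,0)`, `T x = |x|^β` and `ψ` Schwartz, with
`ψ_{1/ε} x = ε ψ (ε x)`: for every `x ≠ 0`, `|T * ψ_{1/ε}(x)| ≤ C ε^(-Re β)` with a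
constant depending only on `ψ`, and hence `T * ψ_{1/ε}(x) → 0` as `ε → 0⁺`. -/
theorem stmt6 (β : ℂ) (h1 : -1 < β.re) (h2 : β.re < 0) (ψ : SchwartzMap ℝ ℂ) :
    ∃ C > (0:ℝ), ∀ x : ℝ, x ≠ 0 →
      (∀ ε : ℝ, 0 < ε →
        ‖∫ y : ℝ, ((|y| : ℝ) : ℂ) ^ β * ((ε : ℂ) * ψ (ε * (x - y)))‖ ≤ C * ε ^ (-β.re)) ∧
      Tendsto (fun ε : ℝ => ∫ y : ℝ, ((|y| : ℝ) : ℂ) ^ β * ((ε : ℂ) * ψ (ε * (x - y))))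
        (nhdsWithin 0 (Set.Ioi 0)) (nhds 0) := by
  obtain ⟨C, hC, hbound⟩ := exists_bound_integral_ofReal_abs_cpow_mul_sub h1 h2.le ψ
  refine ⟨C, hC, fun x _ => ?_⟩
  have hdilation : ∀ ε : ℝ, 0 < ε →
      ‖∫ y : ℝ, ((|y| : ℝ) : ℂ) ^ β * ((ε : ℂ) * ψ (ε * (x - y)))‖ ≤ C * ε ^ (-β.re) := by
    intro ε hε
    rw [integral_ofReal_abs_cpow_mul_dilation β ψ hε x, norm_mul,
      Complex.norm_cpow_eq_rpow_re_of_pos hε, Complex.neg_re, mul_comm]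
    exact mul_le_mul_of_nonneg_right (hbound (ε * x)) (Real.rpow_nonneg hε.le _)
  have hpow : Tendsto (fun ε : ℝ => C * ε ^ (-β.re)) (nhdsWithin 0 (Set.Ioi 0)) (nhds 0) := by
    have hcont := (Real.continuousAt_rpow_const 0 (-β.re) (Or.inr (by linarith))).tendsto
    simpa [Real.zero_rpow (neg_ne_zero.2 h2.ne)] using
      (hcont.mono_left (nhdsWithin_le_nhds (s := Set.Ioi 0))).const_mul C
  exact ⟨hdilation, squeeze_zero_norm' (eventually_nhdsWithin_of_forall hdilation) hpow⟩
end

section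
/- Let 0 < v < u be real numbers and define g_{u,v}(x) = u ln Γ(1+vx) − v ln Γ(1+ux) for x > 0. Then g_{u,v} is strictly decreasing on (0,∞), g_{u,v}(x) → 0 as x → 0⁺, and g_{u,v}(x) → −∞ as x → +∞. -/
/-!
Write `ψ = (log ∘ Γ)'`, so that `g'(x) = u v (ψ (1 + v x) - ψ (1 + u x))`. Convexity of
`log ∘ Γ` (Bohr–Mollerup) makes `ψ` monotone on `(0, ∞)`, and `ψ (x + 1) = ψ x + 1 / x` rules
out equal values, so `ψ` is strictly increasing and `g' < 0`. Comparing `ψ` with the slopes of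
`log ∘ Γ` over unit intervals, which are `log x`, gives `log x ≤ ψ (x + 1)` and `ψ x ≤ log x`;
hence `g'(x) ≤ u v log ((1 + v x) / (u x)) → u v log (v / u) < 0`, and `g` decreases at least
linearly.
-/

open Filter Real Set

namespace Real

noncomputable def digamma : ℝ → ℝ := deriv (log ∘ Gamma)

lemma differentiableAt_log_Gamma {x : ℝ} (hx : 0 < x) :
    DifferentiableAt ℝ (log ∘ Gamma) x := by
  have hx' : ∀ m : ℕ, x ≠ -m := fun m ↦ by linarith [(Nat.cast_nonneg m : (0 : ℝ) ≤ m)]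
  exact (differentiableAt_Gamma hx').log (Gamma_ne_zero hx')

lemma log_Gamma_add_one {x : ℝ} (hx : 0 < x) : log (Gamma (x + 1)) = log (Gamma x) + log x := by
  rw [Gamma_add_one hx.ne', log_mul hx.ne' (Gamma_pos_of_pos hx).ne', add_comm]

lemma digamma_add_one {x : ℝ} (hx : 0 < x) : digamma (x + 1) = digamma x + x⁻¹ := by
  rw [digamma, ← deriv_comp_add_const, ← deriv_log,
    ← deriv_add (differentiableAt_log_Gamma hx) (differentiableAt_log hx.ne')]
  apply EventuallyEq.deriv_eq
  filter_upwards [eventually_gt_nhds hx] with y hy using log_Gamma_add_one hy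

lemma slope_log_Gamma_add_one {x : ℝ} (hx : 0 < x) : slope (log ∘ Gamma) x (x + 1) = log x := by
  rw [slope_def_field, add_sub_cancel_left, div_one, Function.comp_apply, Function.comp_apply,
    log_Gamma_add_one hx, add_sub_cancel_left]

lemma digamma_le_log {x : ℝ} (hx : 0 < x) : digamma x ≤ log x :=
  slope_log_Gamma_add_one hx ▸ convexOn_log_Gamma.deriv_le_slope hx (by simp; linarith)
    (lt_add_one x) (differentiableAt_log_Gamma hx)

lemma log_le_digamma_add_one {x : ℝ} (hx : 0 < x) : log x ≤ digamma (x + 1) :=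
  slope_log_Gamma_add_one hx ▸ convexOn_log_Gamma.slope_le_deriv hx (by simp; linarith)
    (lt_add_one x) (differentiableAt_log_Gamma (by linarith))

lemma digamma_sub_digamma_add_one_le_log {a b : ℝ} (ha : 0 < a) (hb : 0 < b) :
    digamma a - digamma (b + 1) ≤ log (a / b) := by
  rw [log_div ha.ne' hb.ne']
  linarith [digamma_le_log ha, log_le_digamma_add_one hb]

lemma monotoneOn_digamma : MonotoneOn digamma (Ioi 0) :=
  convexOn_log_Gamma.monotoneOn_deriv fun _ hx ↦ differentiableAt_log_Gamma hx

lemma strictMonoOn_digamma : StrictMonoOn digamma (Ioi 0) := by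
  intro a (ha : 0 < a) b (hb : 0 < b) hab
  refine (monotoneOn_digamma ha hb hab.le).lt_of_ne fun heq ↦ ?_
  have hshift := monotoneOn_digamma (show 0 < a + 1 by linarith) (show 0 < b + 1 by linarith)
    (by linarith)
  rw [digamma_add_one ha, digamma_add_one hb, heq] at hshift
  linarith [inv_strictAnti₀ ha hab]

lemma hasDerivAt_log_Gamma_one_add_mul {c x : ℝ} (hx : 0 < 1 + c * x) :
    HasDerivAt (fun y ↦ log (Gamma (1 + c * y))) (c * digamma (1 + c * x)) x := by
  rw [mul_comm]
  exact (differentiableAt_log_Gamma hx).hasDerivAt.comp x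
    (((hasDerivAt_id x).const_mul c).const_add 1 |>.congr_deriv (mul_one c))

end Real

lemma tendsto_atBot_of_hasDerivAt_le_neg {f f' : ℝ → ℝ} {a C : ℝ} (hC : C < 0)
    (hf : ∀ x, a ≤ x → HasDerivAt f (f' x) x) (hf' : ∀ x, a < x → f' x ≤ C) :
    Tendsto f atTop atBot := by
  have hlin : ∀ x, a ≤ x → f x ≤ f a + C * (x - a) := fun x hx ↦ by
    have := (convex_Ici a).image_sub_le_mul_sub_of_deriv_le
      (fun y hy ↦ (hf y hy).continuousAt.continuousWithinAt)
      (fun y hy ↦ (hf y (interior_subset hy)).differentiableAt.differentiableWithinAt)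
      (fun y hy ↦ by
        rw [interior_Ici] at hy
        exact (hf y hy.le).deriv ▸ hf' y hy)
      a self_mem_Ici x hx hx
    linarith
  have hshift : Tendsto (fun x : ℝ ↦ x - a) atTop atTop := by
    simpa only [sub_eq_add_neg] using
      tendsto_atTop_add_const_right atTop (-a) tendsto_id (f := fun x ↦ x)
  exact tendsto_atBot_mono' _ ((eventually_ge_atTop a).mono hlin)
    (tendsto_atBot_add_const_left _ _ (hshift.const_mul_atTop_of_neg hC))

noncomputable def logGammaDiff (u v x : ℝ) : ℝ :=
  u * log (Gamma (1 + v * x)) - v * log (Gamma (1 + u * x))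

section logGammaDiff

variable {u v : ℝ}

lemma logGammaDiff_zero : logGammaDiff u v 0 = 0 := by
  simp [logGammaDiff]

lemma hasDerivAt_logGammaDiff {x : ℝ} (hvx : 0 < 1 + v * x) (hux : 0 < 1 + u * x) :
    HasDerivAt (logGammaDiff u v) (u * v * (digamma (1 + v * x) - digamma (1 + u * x))) x := by
  refine (((hasDerivAt_log_Gamma_one_add_mul hvx).const_mul u).sub
    ((hasDerivAt_log_Gamma_one_add_mul hux).const_mul v)).congr_deriv ?_
  ring

lemma hasDerivAt_logGammaDiff_of_nonneg (hu : 0 ≤ u) (hv : 0 ≤ v) {x : ℝ} (hx : 0 ≤ x) :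
    HasDerivAt (logGammaDiff u v) (u * v * (digamma (1 + v * x) - digamma (1 + u * x))) x :=
  hasDerivAt_logGammaDiff (by positivity) (by positivity)

lemma continuousOn_logGammaDiff (hu : 0 ≤ u) (hv : 0 ≤ v) :
    ContinuousOn (logGammaDiff u v) (Ici 0) :=
  fun _ hx ↦ (hasDerivAt_logGammaDiff_of_nonneg hu hv hx).continuousAt.continuousWithinAt

lemma strictAntiOn_logGammaDiff (hv : 0 < v) (hvu : v < u) :
    StrictAntiOn (logGammaDiff u v) (Ici 0) := by
  have hu : 0 < u := hv.trans hvu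
  refine strictAntiOn_of_hasDerivWithinAt_neg (convex_Ici 0)
    (continuousOn_logGammaDiff hu.le hv.le)
    (fun x hx ↦
      (hasDerivAt_logGammaDiff_of_nonneg hu.le hv.le (interior_subset hx)).hasDerivWithinAt)
    fun x hx ↦ ?_
  replace hx : 0 < x := by rwa [interior_Ici] at hx
  have hψ : digamma (1 + v * x) < digamma (1 + u * x) :=
    strictMonoOn_digamma (by simp; positivity) (by simp; positivity) (by gcongr)
  exact mul_neg_of_pos_of_neg (mul_pos hu hv) (sub_neg.2 hψ)

lemma tendsto_logGammaDiff_atTop (hv : 0 < v) (hvu : v < u) :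
    Tendsto (logGammaDiff u v) atTop atBot := by
  have hu : 0 < u := hv.trans hvu
  have hgap : 0 < u - v := by linarith
  have hratio : (u + v) / (2 * u) < 1 := by rw [div_lt_one (by positivity)]; linarith
  refine tendsto_atBot_of_hasDerivAt_le_neg (a := 2 / (u - v))
    (mul_neg_of_pos_of_neg (mul_pos hu hv) (log_neg (by positivity) hratio))
    (fun x hx ↦ hasDerivAt_logGammaDiff_of_nonneg hu.le hv.le
      ((by positivity : (0 : ℝ) ≤ 2 / (u - v)).trans hx))
    fun x hx ↦ ?_
  have hx0 : 0 < x := (by positivity : 0 < 2 / (u - v)).trans hx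
  have hux : 0 < u * x := by positivity
  refine mul_le_mul_of_nonneg_left ?_ (by positivity)
  calc digamma (1 + v * x) - digamma (1 + u * x)
      ≤ log ((1 + v * x) / (u * x)) := by
        rw [add_comm 1 (u * x)]
        exact digamma_sub_digamma_add_one_le_log (by positivity) hux
    _ ≤ log ((u + v) / (2 * u)) := by
        refine log_le_log (by positivity) ?_
        rw [div_le_div_iff₀ hux (by positivity)]
        rw [div_lt_iff₀ hgap] at hx
        nlinarith

end logGammaDiff

/-- For `0 < v < u`, the function
`g_{u,v} x = u ln Γ(1+vx) − v ln Γ(1+ux)` is strictly decreasing on `(0,∞)`,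
tends to `0` as `x → 0⁺` and to `−∞` as `x → +∞`. -/
theorem stmt9 (u v : ℝ) (hv : 0 < v) (huv : v < u)
    (g : ℝ → ℝ)
    (hg : g = fun x => u * Real.log (Real.Gamma (1 + v * x))
      - v * Real.log (Real.Gamma (1 + u * x))) :
    StrictAntiOn g (Set.Ioi 0) ∧
    Tendsto g (nhdsWithin 0 (Set.Ioi 0)) (nhds 0) ∧
    Tendsto g atTop atBot := by
  change g = logGammaDiff u v at hg
  subst hg
  have hu : 0 < u := hv.trans huv
  have hcont : ContinuousWithinAt (logGammaDiff u v) (Ioi 0) 0 :=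
    (hasDerivAt_logGammaDiff_of_nonneg hu.le hv.le le_rfl).continuousAt.continuousWithinAt
  rw [ContinuousWithinAt, logGammaDiff_zero] at hcont
  exact ⟨(strictAntiOn_logGammaDiff hv huv).mono Ioi_subset_Ici_self, hcont,
    tendsto_logGammaDiff_atTop hv huv⟩
end

section
/- Let 0 < v < u and h_{u,v}(x) = g_{u,v}(1/x) for x > 0, where g_{u,v}(x) = u ln Γ(1+vx) − v ln Γ(1+ux). Then h_{u,v} is a strictly increasing bijection from (0,∞) onto (−∞,0), with h_{u,v}(x) → 0 as x → +∞ and h_{u,v}(x) → −∞ as x → 0⁺; consequently it has a continuous differentiable inverse h_{u,v}^{-1} : (−∞,0) → (0,∞). -/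
/-!
Write `F t = log Γ(1 + t)`, so that `g_{u,v} t = u F(v t) - v F(u t)`. Everything rests on the
strict convexity of `F` on `(-1, ∞)` (log-convexity of `Γ` plus strict concavity of `log`).
Since `F 0 = 0`, the slopes `F(s) / s` increase, which gives `g_{u,v} < 0`; since `F'` increases,
`g'_{u,v} t = u v (F'(v t) - F'(u t)) < 0`. For `g_{u,v} → -∞`, convexity together with
`F s - F (s - 1) = log s` gives `F (u t) ≥ F (v t) + (u - v) t log (v t)`, hence
`g_{u,v} t ≤ (u - v) (F s - s log s)` with `s = v t`, and the chord of `F` from `0` to `⌈s⌉`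
combined with Stirling's upper bound for `⌈s⌉!` gives `F s - s log s ≤ 2 - s / 2`.
-/

open Filter Set Real Topology
open scoped Nat

namespace Real

theorem strictConvexOn_log_Gamma : StrictConvexOn ℝ (Ioi 0) (log ∘ Gamma) := by
  have hshift : ConvexOn ℝ (Ioi 0) (fun x => log (Gamma (x + 1))) :=
    (convexOn_log_Gamma.translate_left 1).subset (fun x (hx : 0 < x) => by simp; linarith)
      (convex_Ioi 0)
  refine (hshift.add_strictConvexOn strictConcaveOn_log_Ioi.neg).congr fun x (hx : 0 < x) => ?_
  simp [Gamma_add_one hx.ne', log_mul hx.ne' (Gamma_pos_of_pos hx).ne']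

theorem log_factorial_le {n : ℕ} (hn : n ≠ 0) :
    log n ! ≤ n * log n - n + log n / 2 + 1 := by
  obtain ⟨m, rfl⟩ := Nat.exists_eq_succ_of_ne_zero hn
  have h := Stirling.log_stirlingSeq'_antitone (Nat.zero_le m)
  simp only [Function.comp, Nat.succ_eq_add_one, zero_add, Stirling.stirlingSeq_one,
    Stirling.log_stirlingSeq_formula] at h
  have hm : (0 : ℝ) < (m + 1 : ℕ) := by positivity
  rw [log_mul two_ne_zero hm.ne', log_div hm.ne' (exp_pos 1).ne', log_exp,
    log_div (exp_pos 1).ne' (by positivity), log_exp, log_sqrt zero_le_two] at h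
  linarith

end Real

noncomputable def logGammaOneAdd (t : ℝ) : ℝ := log (Gamma (1 + t))

lemma logGammaOneAdd_zero : logGammaOneAdd 0 = 0 := by simp [logGammaOneAdd]

lemma logGammaOneAdd_natCast (n : ℕ) : logGammaOneAdd n = log n ! := by
  rw [logGammaOneAdd, add_comm, Gamma_nat_eq_factorial]

lemma logGammaOneAdd_sub_logGammaOneAdd_sub_one {s : ℝ} (hs : 0 < s) :
    logGammaOneAdd s - logGammaOneAdd (s - 1) = log s := by
  rw [logGammaOneAdd, logGammaOneAdd, add_sub_cancel, add_comm, Gamma_add_one hs.ne',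
    log_mul hs.ne' (Gamma_pos_of_pos hs).ne', add_sub_cancel_right]

lemma strictConvexOn_logGammaOneAdd : StrictConvexOn ℝ (Ioi (-1)) logGammaOneAdd := by
  have h := strictConvexOn_log_Gamma.translate_right 1
  rwa [show (fun z : ℝ => 1 + z) ⁻¹' Ioi 0 = Ioi (-1) by ext; simp [neg_lt_iff_pos_add']] at h

lemma differentiableAt_logGammaOneAdd {t : ℝ} (ht : -1 < t) :
    DifferentiableAt ℝ logGammaOneAdd t := by
  have hpos : 0 < 1 + t := by linarith
  have hGamma : DifferentiableAt ℝ Gamma (1 + t) :=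
    differentiableAt_Gamma fun m => by linarith [(Nat.cast_nonneg m : (0 : ℝ) ≤ m)]
  exact (hGamma.comp t (differentiableAt_id.const_add 1)).log (Gamma_pos_of_pos hpos).ne'

lemma logGammaOneAdd_add_mul_log_le {s y : ℝ} (hs : 0 < s) (hsy : s ≤ y) :
    logGammaOneAdd s + (y - s) * log s ≤ logGammaOneAdd y := by
  rcases hsy.eq_or_lt with rfl | hsy
  · simp
  have hslope := strictConvexOn_logGammaOneAdd.convexOn.slope_mono_adjacent
    (show s - 1 ∈ Ioi (-1) by simp [hs]) (show y ∈ Ioi (-1) by simp; linarith)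
    (sub_one_lt s) hsy
  rw [sub_sub_cancel, div_one, logGammaOneAdd_sub_logGammaOneAdd_sub_one hs,
    le_div_iff₀ (sub_pos.2 hsy)] at hslope
  linarith

lemma logGammaOneAdd_sub_mul_log_le {s : ℝ} (hs : 0 < s) :
    logGammaOneAdd s - s * log s ≤ 2 - s / 2 := by
  set N := ⌈s⌉₊
  have hsN : s ≤ N := Nat.le_ceil s
  have hNs : (N : ℝ) < s + 1 := Nat.ceil_lt_add_one hs.le
  have hN : 0 < (N : ℝ) := hs.trans_le hsN
  have hsecant := strictConvexOn_logGammaOneAdd.convexOn.secant_mono (a := 0) (by simp)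
    (show s ∈ Ioi (-1) by simp; linarith) (show (N : ℝ) ∈ Ioi (-1) by simp; linarith)
    hs.ne' hN.ne' hsN
  simp only [logGammaOneAdd_zero, sub_zero, logGammaOneAdd_natCast] at hsecant
  rw [div_le_div_iff₀ hs hN] at hsecant
  have hfact := log_factorial_le (Nat.cast_pos.1 hN).ne'
  have hlogN : log N ≤ N - 1 := log_le_sub_one_of_pos hN
  have hlogNs : log N - log s ≤ N / s - 1 := by
    rw [← log_div hN.ne' hs.ne']; exact log_le_sub_one_of_pos (by positivity)
  have hlogN1 : 0 ≤ log N / 2 + 1 := by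
    have := log_nonneg (Nat.one_le_cast.2 (Nat.one_le_iff_ne_zero.2 (Nat.cast_pos.1 hN).ne'))
    linarith
  have hF : logGammaOneAdd s ≤ s * (log N - 1) + (log N / 2 + 1) := by
    refine le_of_mul_le_mul_right ?_ hN
    have := mul_le_mul_of_nonneg_right hfact hs.le
    have := mul_le_mul_of_nonneg_right hsN hlogN1
    linarith
  have hlog : s * log N - s * log s ≤ N - s := by
    have := mul_le_mul_of_nonneg_left hlogNs hs.le
    rwa [mul_sub, mul_sub, mul_div_cancel₀ _ hs.ne', mul_one] at this
  linarith

lemma tendsto_logGammaOneAdd_sub_mul_log_atTop :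
    Tendsto (fun s => logGammaOneAdd s - s * log s) atTop atBot := by
  have hlin : Tendsto (fun s : ℝ => 2 - s / 2) atTop atBot :=
    tendsto_atBot_add_const_left atTop 2
      (tendsto_neg_atTop_atBot.comp (tendsto_id.atTop_div_const two_pos))
  refine tendsto_atBot_mono' atTop ?_ hlin
  filter_upwards [eventually_gt_atTop 0] with s hs
  exact logGammaOneAdd_sub_mul_log_le hs

noncomputable def gammaLogRatio (u v t : ℝ) : ℝ :=
  u * logGammaOneAdd (v * t) - v * logGammaOneAdd (u * t)

section gammaLogRatio

variable {u v : ℝ}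

lemma gammaLogRatio_neg (hv : 0 < v) (huv : v < u) {t : ℝ} (ht : 0 < t) :
    gammaLogRatio u v t < 0 := by
  have hvt : 0 < v * t := by positivity
  have hut : 0 < u * t := by nlinarith
  have hsecant := strictConvexOn_logGammaOneAdd.secant_strict_mono (a := 0) (by simp)
    (show v * t ∈ Ioi (-1) by simp; linarith)
    (show u * t ∈ Ioi (-1) by simp; linarith) hvt.ne' hut.ne' (mul_lt_mul_of_pos_right huv ht)
  simp only [logGammaOneAdd_zero, sub_zero] at hsecant
  rw [div_lt_div_iff₀ hvt hut] at hsecant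
  rw [gammaLogRatio]
  nlinarith

lemma gammaLogRatio_le (hv : 0 < v) (huv : v < u) {t : ℝ} (ht : 0 < t) :
    gammaLogRatio u v t ≤ (u - v) * (logGammaOneAdd (v * t) - v * t * log (v * t)) := by
  have h := logGammaOneAdd_add_mul_log_le (mul_pos hv ht)
    (mul_le_mul_of_nonneg_right huv.le ht.le)
  rw [gammaLogRatio]
  nlinarith

lemma tendsto_gammaLogRatio_atTop (hv : 0 < v) (huv : v < u) :
    Tendsto (gammaLogRatio u v) atTop atBot := by
  have hlim := (tendsto_logGammaOneAdd_sub_mul_log_atTop.comp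
    (tendsto_id.const_mul_atTop hv)).const_mul_atBot (sub_pos.2 huv)
  refine tendsto_atBot_mono' atTop ?_ hlim
  filter_upwards [eventually_gt_atTop 0] with t ht
  exact gammaLogRatio_le hv huv ht

lemma tendsto_gammaLogRatio_nhdsGT_zero :
    Tendsto (gammaLogRatio u v) (𝓝[>] 0) (𝓝 0) := by
  have hF : ContinuousAt logGammaOneAdd 0 :=
    (differentiableAt_logGammaOneAdd neg_one_lt_zero).continuousAt
  have hcont : ContinuousAt (gammaLogRatio u v) 0 :=
    ((hF.comp_of_eq (continuous_const_mul v).continuousAt (mul_zero v)).const_mul u).sub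
      ((hF.comp_of_eq (continuous_const_mul u).continuousAt (mul_zero u)).const_mul v)
  simpa [gammaLogRatio, logGammaOneAdd_zero] using hcont.tendsto.mono_left nhdsWithin_le_nhds

lemma exists_hasDerivAt_gammaLogRatio_neg (hv : 0 < v) (huv : v < u) {t : ℝ} (ht : 0 < t) :
    ∃ d < 0, HasDerivAt (gammaLogRatio u v) d t := by
  have hvt : -1 < v * t := by nlinarith
  have hut : -1 < u * t := by nlinarith
  have hderiv_lt : deriv logGammaOneAdd (v * t) < deriv logGammaOneAdd (u * t) :=
    strictConvexOn_logGammaOneAdd.strictMonoOn_deriv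
      (fun z hz => differentiableAt_logGammaOneAdd hz) hvt hut (mul_lt_mul_of_pos_right huv ht)
  refine ⟨u * v * (deriv logGammaOneAdd (v * t) - deriv logGammaOneAdd (u * t)),
    mul_neg_of_pos_of_neg (by nlinarith) (sub_neg.2 hderiv_lt), ?_⟩
  have hFv := (differentiableAt_logGammaOneAdd hvt).hasDerivAt.comp t
    ((hasDerivAt_id t).const_mul v)
  have hFu := (differentiableAt_logGammaOneAdd hut).hasDerivAt.comp t
    ((hasDerivAt_id t).const_mul u)
  exact ((hFv.const_mul u).sub (hFu.const_mul v)).congr_deriv (by ring)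

lemma exists_hasDerivAt_gammaLogRatio_one_div_pos (hv : 0 < v) (huv : v < u) {x : ℝ}
    (hx : 0 < x) : ∃ d > 0, HasDerivAt (fun x => gammaLogRatio u v (1 / x)) d x := by
  obtain ⟨d, hd, hderiv⟩ := exists_hasDerivAt_gammaLogRatio_neg hv huv (one_div_pos.2 hx)
  have hinv : HasDerivAt (fun x : ℝ => 1 / x) (-(x ^ 2)⁻¹) x := by
    simpa only [one_div] using hasDerivAt_inv hx.ne'
  exact ⟨d * -(x ^ 2)⁻¹, mul_pos_of_neg_of_neg hd (by simp; positivity), hderiv.comp x hinv⟩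

end gammaLogRatio

theorem surjOn_Iio_of_tendsto {f : ℝ → ℝ} {c : ℝ} (hf : ContinuousOn f (Ioi 0))
    (hbot : Tendsto f (𝓝[>] 0) atBot) (htop : Tendsto f atTop (𝓝 c)) :
    SurjOn f (Ioi 0) (Iio c) := by
  intro y (hy : y < c)
  obtain ⟨a, hay, ha⟩ :=
    ((hbot.eventually (eventually_lt_atBot y)).and self_mem_nhdsWithin).exists
  obtain ⟨b, hyb, hab⟩ :=
    ((htop.eventually (lt_mem_nhds hy)).and (eventually_ge_atTop a)).exists
  have hsub : Icc a b ⊆ Ioi 0 := fun z hz => lt_of_lt_of_le ha hz.1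
  obtain ⟨x, hx, rfl⟩ := intermediate_value_Icc hab (hf.mono hsub) ⟨hay.le, hyb.le⟩
  exact ⟨x, hsub hx, rfl⟩

theorem StrictMonoOn.exists_invOn_differentiableAt {f : ℝ → ℝ} {s t : Set ℝ} (hs : IsOpen s)
    (ht : IsOpen t) (hmono : StrictMonoOn f s) (hbij : BijOn f s t)
    (hderiv : ∀ x ∈ s, ∃ d ≠ 0, HasDerivAt f d x) :
    ∃ g : ℝ → ℝ, InvOn g f s t ∧ ContinuousOn g t ∧ ∀ y ∈ t, DifferentiableAt ℝ g y := by
  set g := Function.invFunOn f s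
  have hinv : InvOn g f s t := hbij.invOn_invFunOn
  have hbij' : BijOn g t s := hbij.symm hinv.symm
  have hmono' : StrictMonoOn g t := by
    intro y₁ hy₁ y₂ hy₂ hy
    refine (hmono.lt_iff_lt (hbij'.mapsTo hy₁) (hbij'.mapsTo hy₂)).1 ?_
    rwa [hinv.2 hy₁, hinv.2 hy₂]
  have hcont : ∀ y ∈ t, ContinuousAt g y := fun y hy =>
    hmono'.continuousAt_of_image_mem_nhds (ht.mem_nhds hy)
      (hbij'.image_eq ▸ hs.mem_nhds (hbij'.mapsTo hy))
  refine ⟨g, hinv, fun y hy => (hcont y hy).continuousWithinAt, fun y hy => ?_⟩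
  obtain ⟨d, hd, hfd⟩ := hderiv (g y) (hbij'.mapsTo hy)
  exact (hfd.of_local_left_inverse (hcont y hy) hd
    (eventually_of_mem (ht.mem_nhds hy) fun z hz => hinv.2 hz)).differentiableAt

/-- For `0 < v < u` and `h_{u,v} x = g_{u,v}(1/x)` with
`g_{u,v} x = u ln Γ(1+vx) − v ln Γ(1+ux)`, the function `h_{u,v}` is a strictly
increasing bijection from `(0,∞)` onto `(−∞,0)`, with `h → 0` at `+∞` and
`h → −∞` at `0⁺`; consequently it has an inverse `(−∞,0) → (0,∞)` which is
continuous and differentiable. -/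
theorem stmt10 (u v : ℝ) (hv : 0 < v) (huv : v < u)
    (h : ℝ → ℝ)
    (hh : h = fun x => u * Real.log (Real.Gamma (1 + v * (1/x)))
      - v * Real.log (Real.Gamma (1 + u * (1/x)))) :
    StrictMonoOn h (Set.Ioi 0) ∧
    Set.BijOn h (Set.Ioi 0) (Set.Iio 0) ∧
    Tendsto h atTop (nhds 0) ∧
    Tendsto h (nhdsWithin 0 (Set.Ioi 0)) atBot ∧
    ∃ hinv : ℝ → ℝ, Set.InvOn hinv h (Set.Ioi 0) (Set.Iio 0) ∧
      ContinuousOn hinv (Set.Iio 0) ∧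
      ∀ y : ℝ, y < 0 → DifferentiableAt ℝ hinv y := by
  replace hh : h = fun x => gammaLogRatio u v (1 / x) := hh
  subst hh
  have hderiv := fun x (hx : 0 < x) => exists_hasDerivAt_gammaLogRatio_one_div_pos hv huv hx
  have hcont : ContinuousOn (fun x => gammaLogRatio u v (1 / x)) (Ioi 0) := fun x hx => by
    obtain ⟨d, -, hdd⟩ := hderiv x hx
    exact hdd.continuousAt.continuousWithinAt
  have hmono : StrictMonoOn (fun x => gammaLogRatio u v (1 / x)) (Ioi 0) :=
    strictMonoOn_of_deriv_pos (convex_Ioi 0) hcont fun x hx => by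
      rw [interior_Ioi] at hx
      obtain ⟨d, hd, hdd⟩ := hderiv x hx
      rwa [hdd.deriv]
  have htop : Tendsto (fun x => gammaLogRatio u v (1 / x)) atTop (𝓝 0) :=
    tendsto_gammaLogRatio_nhdsGT_zero.comp
      (tendsto_inv_atTop_nhdsGT_zero.congr fun x => (one_div x).symm)
  have hbot : Tendsto (fun x => gammaLogRatio u v (1 / x)) (𝓝[>] 0) atBot :=
    (tendsto_gammaLogRatio_atTop hv huv).comp
      (tendsto_inv_nhdsGT_zero.congr fun x => (one_div x).symm)
  have hbij : BijOn (fun x => gammaLogRatio u v (1 / x)) (Ioi 0) (Iio 0) :=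
    ⟨fun x hx => gammaLogRatio_neg hv huv (one_div_pos.2 hx), hmono.injOn,
      surjOn_Iio_of_tendsto hcont hbot htop⟩
  obtain ⟨hinv, hinvOn, hinvCont, hinvDiff⟩ :=
    hmono.exists_invOn_differentiableAt isOpen_Ioi isOpen_Iio hbij
      fun x hx => (hderiv x hx).imp fun _ hd => ⟨hd.1.ne', hd.2⟩
  exact ⟨hmono, hbij, htop, hbot, hinv, hinvOn, hinvCont, hinvDiff⟩
end

section
/- Let (U,V) be a centered bivariate Gaussian vector with unit variances and correlation ρ, |ρ| < 1, and let β ∈ ℂ with Re(β) ∈ (−1/2, 0). Then there is a constant C (independent of ρ) such that |cov(|U|^β, |V|^{β̄})| ≤ C ρ² for all |ρ| ≤ 1/2. -/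
/-!
Reflecting `y ↦ -y` fixes `|x|^β |y|^β̄` and turns `f_ρ` into `f_{-ρ}`, so the covariance is the
integral of `|x|^β |y|^β̄` against `(f_ρ + f_{-ρ})/2 - f_0`: the first-order term in `ρ` cancels.
The ratio of the symmetrised density to `f_0` is
`(1-ρ²)^{-1/2} exp(-ρ²(x²+y²)/(2(1-ρ²))) cosh(ρxy/(1-ρ²)) = 1 + O(ρ²)`, with an error at most
`ρ² (1+x²)(1+y²) exp((x²+y²)/3)`. Multiplied by `f_0` this leaves the tail
`(1+x²)(1+y²) exp(-(x²+y²)/6)`, which is integrable against `|x|^{Re β} |y|^{Re β}` as `Re β > -1`.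
-/

open MeasureTheory Real Set

lemma sinh_le_mul_exp (v : ℝ) : sinh v ≤ v * exp v := by
  have h : exp (-v) = exp v * exp (-(2 * v)) := by rw [← exp_add]; ring_nf
  rw [sinh_eq, h]
  nlinarith [add_one_le_exp (-(2 * v)), exp_pos v]

lemma cosh_le_exp_abs (u : ℝ) : cosh u ≤ exp |u| := by
  rw [← cosh_abs, cosh_eq]
  linarith [exp_le_exp.2 (neg_le_self (abs_nonneg u))]

lemma cosh_sub_one_le (u : ℝ) : cosh u - 1 ≤ u ^ 2 / 2 * exp |u| := by
  set v := |u| / 2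
  have hv : 0 ≤ v := by positivity
  have hcosh : cosh u - 1 = 2 * sinh v ^ 2 := by
    rw [← cosh_abs, show |u| = 2 * v by ring, cosh_two_mul, cosh_sq]; ring
  have hexp : exp |u| = exp v ^ 2 := by rw [← exp_nat_mul]; congr 1; push_cast; ring
  have hu : u ^ 2 = 4 * v ^ 2 := by rw [← sq_abs u]; ring
  rw [hcosh, hexp, hu]
  nlinarith [sinh_le_mul_exp v, sinh_nonneg_iff.2 hv]

lemma norm_ofReal_abs_cpow_le (x : ℝ) (β : ℂ) : ‖((|x| : ℝ) : ℂ) ^ β‖ ≤ |x| ^ β.re := by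
  simpa [Complex.arg_ofReal_of_nonneg (abs_nonneg x)] using Complex.norm_cpow_le ((|x| : ℝ) : ℂ) β

lemma integrable_abs_rpow_mul_exp_neg_mul_sq {a b : ℝ} (ha : -1 < a) (hb : 0 < b) :
    Integrable fun x : ℝ => |x| ^ a * exp (-b * x ^ 2) := by
  have hpos : IntegrableOn (fun x : ℝ => |x| ^ a * exp (-b * x ^ 2)) (Ioi 0) :=
    (integrableOn_rpow_mul_exp_neg_mul_sq hb ha).congr_fun
      (fun x hx => by rw [abs_of_pos (mem_Ioi.1 hx)]) measurableSet_Ioi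
  rw [← integrableOn_univ, ← Iio_union_Ici (a := (0 : ℝ)), integrableOn_union,
    integrableOn_Ici_iff_integrableOn_Ioi]
  refine ⟨?_, hpos⟩
  rw [← (Measure.measurePreserving_neg (volume : Measure ℝ)).integrableOn_comp_preimage
    (Homeomorph.neg ℝ).measurableEmbedding]
  simpa only [Function.comp_def, neg_sq, abs_neg, neg_preimage, neg_Iio, neg_zero] using hpos

noncomputable def bivariateNormalDensity (ρ : ℝ) (p : ℝ × ℝ) : ℝ :=
  (2 * π * √(1 - ρ ^ 2))⁻¹ *
    exp (-(p.1 ^ 2 + p.2 ^ 2 - 2 * ρ * p.1 * p.2) / (2 * (1 - ρ ^ 2)))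

noncomputable def gaussianEnvelope (x : ℝ) : ℝ := (1 + x ^ 2) * exp (-x ^ 2 / 6)

lemma bivariateNormalDensity_nonneg (ρ : ℝ) (p : ℝ × ℝ) : 0 ≤ bivariateNormalDensity ρ p := by
  unfold bivariateNormalDensity; positivity

lemma bivariateNormalDensity_neg_snd (ρ x y : ℝ) :
    bivariateNormalDensity ρ (x, -y) = bivariateNormalDensity (-ρ) (x, y) := by
  simp only [bivariateNormalDensity, mul_neg, neg_mul, sub_neg_eq_add, even_two,
    Even.neg_pow]

lemma bivariateNormalDensity_zero (x y : ℝ) :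
    bivariateNormalDensity 0 (x, y) =
      ((√(2 * π))⁻¹ * exp (-x ^ 2 / 2)) * ((√(2 * π))⁻¹ * exp (-y ^ 2 / 2)) := by
  have hπ : √(2 * π) * √(2 * π) = 2 * π := mul_self_sqrt (by positivity)
  simp only [bivariateNormalDensity, ne_eq, OfNat.ofNat_ne_zero, not_false_eq_true, zero_pow,
    sub_zero, sqrt_one, mul_one, zero_mul, mul_zero]
  rw [mul_mul_mul_comm, ← mul_inv, hπ, ← exp_add]
  ring_nf

lemma abs_mul_mul_le_of_abs_le_half {ρ : ℝ} (hρ : |ρ| ≤ 1 / 2) (x y : ℝ) :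
    |ρ * x * y| ≤ (x ^ 2 + y ^ 2) / 4 := by
  rw [abs_mul, abs_mul]
  have : |x| * |y| ≤ (x ^ 2 + y ^ 2) / 2 := by
    nlinarith [sq_nonneg (|x| - |y|), sq_abs x, sq_abs y]
  nlinarith [abs_nonneg ρ, mul_nonneg (abs_nonneg x) (abs_nonneg y)]

lemma bivariateNormalDensity_le {ρ : ℝ} (hρ : |ρ| ≤ 1 / 2) (x y : ℝ) :
    bivariateNormalDensity ρ (x, y) ≤ gaussianEnvelope x * gaussianEnvelope y := by
  have hρ2 : ρ ^ 2 ≤ 1 / 4 := by nlinarith [sq_abs ρ, abs_nonneg ρ]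
  have hsqrt : 1 / 2 ≤ √(1 - ρ ^ 2) := le_sqrt_of_sq_le (by linarith)
  have hcoef : (2 * π * √(1 - ρ ^ 2))⁻¹ ≤ 1 :=
    inv_le_one_of_one_le₀ (by nlinarith [pi_gt_three])
  have hxy := (abs_le.1 (abs_mul_mul_le_of_abs_le_half hρ x y)).2
  have hexp : exp (-(x ^ 2 + y ^ 2 - 2 * ρ * x * y) / (2 * (1 - ρ ^ 2)))
      ≤ exp (-x ^ 2 / 6) * exp (-y ^ 2 / 6) := by
    rw [← exp_add, exp_le_exp, div_le_iff₀ (by linarith)]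
    nlinarith [mul_nonneg (add_nonneg (sq_nonneg x) (sq_nonneg y)) (sq_nonneg ρ)]
  calc bivariateNormalDensity ρ (x, y)
      ≤ 1 * (exp (-x ^ 2 / 6) * exp (-y ^ 2 / 6)) :=
        mul_le_mul hcoef hexp (exp_pos _).le zero_le_one
    _ ≤ gaussianEnvelope x * gaussianEnvelope y := by
        rw [one_mul, gaussianEnvelope, gaussianEnvelope, mul_mul_mul_comm]
        refine le_mul_of_one_le_left (by positivity) ?_
        nlinarith [sq_nonneg x, sq_nonneg y, mul_nonneg (sq_nonneg x) (sq_nonneg y)]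

lemma bivariateNormalDensity_add_neg (ρ x y : ℝ) :
    bivariateNormalDensity ρ (x, y) + bivariateNormalDensity (-ρ) (x, y) =
      2 * bivariateNormalDensity 0 (x, y) * ((√(1 - ρ ^ 2))⁻¹ *
        exp (-(ρ ^ 2 * (x ^ 2 + y ^ 2)) / (2 * (1 - ρ ^ 2))) * cosh (ρ * x * y / (1 - ρ ^ 2))) := by
  rcases eq_or_ne (1 - ρ ^ 2) 0 with ht | ht
  · -- both sides vanish, through `√0 = 0` and `0⁻¹ = 0`
    simp [bivariateNormalDensity, ht]
  have hsplit : ∀ r : ℝ, r ^ 2 = ρ ^ 2 →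
      -(x ^ 2 + y ^ 2 - 2 * r * x * y) / (2 * (1 - r ^ 2)) =
        -(x ^ 2 + y ^ 2) / 2 + -(ρ ^ 2 * (x ^ 2 + y ^ 2)) / (2 * (1 - ρ ^ 2)) +
          r * x * y / (1 - ρ ^ 2) := by
    intro r hr
    rw [hr]; field_simp; ring
  simp only [bivariateNormalDensity, hsplit ρ rfl, hsplit (-ρ) (neg_sq ρ), exp_add, cosh_eq]
  field_simp
  ring_nf

lemma abs_inv_sqrt_mul_exp_sub_one_le {ρ s : ℝ} (hρ : |ρ| ≤ 1 / 2) (hs : 0 ≤ s) :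
    |(√(1 - ρ ^ 2))⁻¹ * exp (-(ρ ^ 2 * s) / (2 * (1 - ρ ^ 2))) - 1| ≤ ρ ^ 2 * (1 + s) := by
  have hρ2 : ρ ^ 2 ≤ 1 / 4 := by nlinarith [sq_abs ρ, abs_nonneg ρ]
  set r := √(1 - ρ ^ 2)
  have hr2 : r ^ 2 = 1 - ρ ^ 2 := sq_sqrt (by linarith)
  have hr0 : 0 < r := sqrt_pos.2 (by linarith)
  have hr1 : r ≤ 1 := sqrt_le_one.2 (sub_le_self _ (sq_nonneg ρ))
  have hw1 : 1 ≤ r⁻¹ := one_le_inv₀ hr0 |>.2 hr1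
  have hw2 : r⁻¹ ≤ 1 + ρ ^ 2 := by
    rw [inv_le_iff_one_le_mul₀ hr0]
    nlinarith [mul_nonneg (sub_nonneg.2 hr1) (show 0 ≤ r ^ 2 + r - 1 by nlinarith)]
  set u := ρ ^ 2 * s / (2 * (1 - ρ ^ 2))
  have hu0 : 0 ≤ u := div_nonneg (by positivity) (by linarith)
  have hu : u ≤ ρ ^ 2 * s := div_le_self (by positivity) (by linarith)
  have he1 : exp (-u) ≤ 1 := exp_le_one_iff.2 (by linarith)
  have he2 : 1 - u ≤ exp (-u) := by linarith [add_one_le_exp (-u)]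
  rw [neg_div, abs_le]
  constructor <;> nlinarith [exp_pos (-u), sq_nonneg ρ, mul_nonneg (sq_nonneg ρ) hs]

lemma abs_symm_ratio_sub_one_le {ρ : ℝ} (hρ : |ρ| ≤ 1 / 2) (x y : ℝ) :
    |(√(1 - ρ ^ 2))⁻¹ * exp (-(ρ ^ 2 * (x ^ 2 + y ^ 2)) / (2 * (1 - ρ ^ 2))) *
        cosh (ρ * x * y / (1 - ρ ^ 2)) - 1|
      ≤ ρ ^ 2 * ((1 + x ^ 2) * (1 + y ^ 2) * exp ((x ^ 2 + y ^ 2) / 3)) := by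
  have hρ2 : ρ ^ 2 ≤ 1 / 4 := by nlinarith [sq_abs ρ, abs_nonneg ρ]
  set s := x ^ 2 + y ^ 2
  set A := (√(1 - ρ ^ 2))⁻¹ * exp (-(ρ ^ 2 * s) / (2 * (1 - ρ ^ 2)))
  set u := ρ * x * y / (1 - ρ ^ 2)
  have hA : |A - 1| ≤ ρ ^ 2 * (1 + s) := abs_inv_sqrt_mul_exp_sub_one_le hρ (by positivity)
  have hu : |u| ≤ s / 3 := by
    rw [abs_div, abs_of_pos (by linarith : 0 < 1 - ρ ^ 2), div_le_iff₀ (by linarith)]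
    nlinarith [abs_mul_mul_le_of_abs_le_half hρ x y, sq_nonneg x, sq_nonneg y]
  have hu2 : u ^ 2 / 2 ≤ ρ ^ 2 * (x ^ 2 * y ^ 2) := by
    rw [div_pow, div_div, div_le_iff₀ (by nlinarith)]
    nlinarith [mul_nonneg (sq_nonneg (ρ * x * y)) (show 0 ≤ 2 * (1 - ρ ^ 2) ^ 2 - 1 by nlinarith)]
  have hexp : exp |u| ≤ exp (s / 3) := exp_le_exp.2 hu
  have hcosh : cosh u ≤ exp (s / 3) := (cosh_le_exp_abs u).trans hexp
  have hcosh1 : cosh u - 1 ≤ ρ ^ 2 * (x ^ 2 * y ^ 2) * exp (s / 3) :=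
    (cosh_sub_one_le u).trans (mul_le_mul hu2 hexp (exp_pos _).le (by positivity))
  have hc1 := one_le_cosh u
  calc |A * cosh u - 1| = |(A - 1) * cosh u + (cosh u - 1)| := by ring_nf
    _ ≤ |A - 1| * cosh u + (cosh u - 1) := by
        refine (abs_add_le _ _).trans ?_
        rw [abs_mul, abs_of_nonneg (by linarith : 0 ≤ cosh u), abs_of_nonneg (sub_nonneg.2 hc1)]
    _ ≤ ρ ^ 2 * (1 + s) * exp (s / 3) + ρ ^ 2 * (x ^ 2 * y ^ 2) * exp (s / 3) := by
        gcongr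
    _ = ρ ^ 2 * ((1 + x ^ 2) * (1 + y ^ 2) * exp (s / 3)) := by ring

lemma bivariateNormalDensity_zero_mul_exp_le (x y : ℝ) :
    bivariateNormalDensity 0 (x, y) * exp ((x ^ 2 + y ^ 2) / 3) ≤
      exp (-x ^ 2 / 6) * exp (-y ^ 2 / 6) := by
  have hcoef : (2 * π)⁻¹ ≤ 1 := inv_le_one_of_one_le₀ (by linarith [pi_gt_three])
  simp only [bivariateNormalDensity, ne_eq, OfNat.ofNat_ne_zero, not_false_eq_true, zero_pow,
    sub_zero, sqrt_one, mul_one, zero_mul, mul_zero]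
  rw [mul_assoc, ← exp_add, ← exp_add]
  refine (mul_le_of_le_one_left (exp_pos _).le hcoef).trans_eq ?_
  ring_nf

lemma abs_bivariateNormalDensity_symm_sub_le {ρ : ℝ} (hρ : |ρ| ≤ 1 / 2) (x y : ℝ) :
    |(bivariateNormalDensity ρ (x, y) + bivariateNormalDensity (-ρ) (x, y)) / 2 -
        bivariateNormalDensity 0 (x, y)| ≤ ρ ^ 2 * (gaussianEnvelope x * gaussianEnvelope y) := by
  rw [bivariateNormalDensity_add_neg, mul_assoc, mul_div_cancel_left₀ _ two_ne_zero,
    ← mul_sub_one, abs_mul, abs_of_nonneg (bivariateNormalDensity_nonneg _ _)]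
  calc bivariateNormalDensity 0 (x, y) * |_ - 1|
      ≤ bivariateNormalDensity 0 (x, y) *
          (ρ ^ 2 * ((1 + x ^ 2) * (1 + y ^ 2) * exp ((x ^ 2 + y ^ 2) / 3))) :=
        mul_le_mul_of_nonneg_left (abs_symm_ratio_sub_one_le hρ x y)
          (bivariateNormalDensity_nonneg _ _)
    _ = ρ ^ 2 * ((1 + x ^ 2) * (1 + y ^ 2)) *
          (bivariateNormalDensity 0 (x, y) * exp ((x ^ 2 + y ^ 2) / 3)) := by ring
    _ ≤ ρ ^ 2 * ((1 + x ^ 2) * (1 + y ^ 2)) * (exp (-x ^ 2 / 6) * exp (-y ^ 2 / 6)) :=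
        mul_le_mul_of_nonneg_left (bivariateNormalDensity_zero_mul_exp_le x y) (by positivity)
    _ = ρ ^ 2 * (gaussianEnvelope x * gaussianEnvelope y) := by
        simp only [gaussianEnvelope]; ring

lemma integrable_abs_rpow_mul_gaussianEnvelope {a : ℝ} (ha : -1 < a) :
    Integrable fun x : ℝ => |x| ^ a * gaussianEnvelope x := by
  have h := (integrable_abs_rpow_mul_exp_neg_mul_sq ha (b := 1 / 6) (by norm_num)).add
    (integrable_abs_rpow_mul_exp_neg_mul_sq (a := a + 2) (by linarith) (b := 1 / 6) (by norm_num))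
  refine h.congr (ae_of_all _ fun x => ?_)
  simp only [Pi.add_apply]
  rw [rpow_add' (abs_nonneg x) (by linarith), rpow_two, sq_abs, gaussianEnvelope]
  ring_nf

lemma continuous_bivariateNormalDensity (ρ : ℝ) : Continuous (bivariateNormalDensity ρ) := by
  unfold bivariateNormalDensity; fun_prop

lemma integral_mul_bivariateNormalDensity_neg {F : ℝ × ℝ → ℂ}
    (hF : ∀ x y, F (x, -y) = F (x, y)) (ρ : ℝ) :
    ∫ p, F p * bivariateNormalDensity (-ρ) p = ∫ p, F p * bivariateNormalDensity ρ p := by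
  have hmp : MeasurePreserving (fun p : ℝ × ℝ => (p.1, -p.2)) := by
    rw [Measure.volume_eq_prod]
    exact (MeasurePreserving.id volume).prod (Measure.measurePreserving_neg volume)
  rw [← hmp.integral_comp ((Homeomorph.refl ℝ).prodCongr (Homeomorph.neg ℝ)).measurableEmbedding]
  congr 1 with p
  simp only [hF, bivariateNormalDensity_neg_snd, neg_neg]

lemma integrable_mul_bivariateNormalDensity {F : ℝ × ℝ → ℂ} {G : ℝ × ℝ → ℝ} {ρ : ℝ}
    (hρ : |ρ| ≤ 1 / 2) (hF : AEStronglyMeasurable F) (hFG : ∀ p, ‖F p‖ ≤ G p)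
    (hG : Integrable fun p => G p * (gaussianEnvelope p.1 * gaussianEnvelope p.2)) :
    Integrable fun p => F p * bivariateNormalDensity ρ p := by
  refine hG.mono' (hF.mul (Complex.continuous_ofReal.comp
    (continuous_bivariateNormalDensity ρ)).aestronglyMeasurable) (ae_of_all _ fun p => ?_)
  rw [norm_mul, Complex.norm_real, norm_of_nonneg (bivariateNormalDensity_nonneg ρ p)]
  exact mul_le_mul (hFG p) (bivariateNormalDensity_le hρ p.1 p.2)
    (bivariateNormalDensity_nonneg ρ p) ((norm_nonneg _).trans (hFG p))

lemma norm_integral_mul_bivariateNormalDensity_sub_le {F : ℝ × ℝ → ℂ} {G : ℝ × ℝ → ℝ} {ρ : ℝ}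
    (hρ : |ρ| ≤ 1 / 2) (hF : AEStronglyMeasurable F) (hF_symm : ∀ x y, F (x, -y) = F (x, y))
    (hFG : ∀ p, ‖F p‖ ≤ G p)
    (hG : Integrable fun p => G p * (gaussianEnvelope p.1 * gaussianEnvelope p.2)) :
    ‖(∫ p, F p * bivariateNormalDensity ρ p) - ∫ p, F p * bivariateNormalDensity 0 p‖ ≤
      ρ ^ 2 * ∫ p, G p * (gaussianEnvelope p.1 * gaussianEnvelope p.2) := by
  have hint : ∀ r : ℝ, |r| ≤ 1 / 2 → Integrable fun p => F p * bivariateNormalDensity r p :=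
    fun r hr => integrable_mul_bivariateNormalDensity hr hF hFG hG
  have hsymm : (∫ p, F p * bivariateNormalDensity ρ p) - ∫ p, F p * bivariateNormalDensity 0 p =
      ∫ p, F p * ((bivariateNormalDensity ρ p + bivariateNormalDensity (-ρ) p) / 2 -
        bivariateNormalDensity 0 p : ℝ) := by
    calc _ = ((∫ p, F p * bivariateNormalDensity ρ p) +
            ∫ p, F p * bivariateNormalDensity (-ρ) p) / 2 -
          ∫ p, F p * bivariateNormalDensity 0 p := by
          rw [integral_mul_bivariateNormalDensity_neg hF_symm]; ring
      _ = _ := by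
          rw [← integral_add (hint ρ hρ) (hint (-ρ) (by rwa [abs_neg])), ← integral_div,
            ← integral_sub _ (hint 0 (by norm_num))]
          · congr 1 with p; push_cast; ring
          · exact ((hint ρ hρ).add (hint (-ρ) (by rwa [abs_neg]))).div_const 2
  rw [hsymm, ← integral_const_mul]
  refine norm_integral_le_of_norm_le (hG.const_mul _) (ae_of_all _ fun p => ?_)
  rw [norm_mul, Complex.norm_real, norm_eq_abs]
  calc ‖F p‖ * |_| ≤ G p * (ρ ^ 2 * (gaussianEnvelope p.1 * gaussianEnvelope p.2)) :=
        mul_le_mul (hFG p) (abs_bivariateNormalDensity_symm_sub_le hρ p.1 p.2) (abs_nonneg _)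
          ((norm_nonneg _).trans (hFG p))
    _ = ρ ^ 2 * (G p * (gaussianEnvelope p.1 * gaussianEnvelope p.2)) := by ring

theorem stmt12_general (β : ℂ) (h1 : -(1/2 : ℝ) < β.re) :
    ∃ C > (0:ℝ), ∀ ρ : ℝ, |ρ| ≤ 1/2 →
      ‖(∫ p : ℝ × ℝ,
            ((|p.1| : ℝ) : ℂ) ^ β * ((|p.2| : ℝ) : ℂ) ^ (starRingEnd ℂ β) *
              (((2 * Real.pi * Real.sqrt (1 - ρ ^ 2))⁻¹ *
                Real.exp (-(p.1 ^ 2 + p.2 ^ 2 - 2 * ρ * p.1 * p.2) /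
                  (2 * (1 - ρ ^ 2))) : ℝ) : ℂ))
        - (∫ x : ℝ, ((|x| : ℝ) : ℂ) ^ β *
              (((Real.sqrt (2 * Real.pi))⁻¹ * Real.exp (-x ^ 2 / 2) : ℝ) : ℂ)) *
          (∫ y : ℝ, ((|y| : ℝ) : ℂ) ^ (starRingEnd ℂ β) *
              (((Real.sqrt (2 * Real.pi))⁻¹ * Real.exp (-y ^ 2 / 2) : ℝ) : ℂ))‖
        ≤ C * ρ ^ 2 := by
  have ha : -1 < β.re := by linarith
  set F : ℝ × ℝ → ℂ := fun p => ((|p.1| : ℝ) : ℂ) ^ β * ((|p.2| : ℝ) : ℂ) ^ (starRingEnd ℂ β)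
  set G : ℝ × ℝ → ℝ := fun p => |p.1| ^ β.re * |p.2| ^ β.re
  have hF : Measurable F := by fun_prop
  have hFG : ∀ p, ‖F p‖ ≤ G p := fun p => by
    rw [norm_mul]
    refine mul_le_mul (norm_ofReal_abs_cpow_le _ _) ?_ (norm_nonneg _) (by positivity)
    simpa using norm_ofReal_abs_cpow_le p.2 (starRingEnd ℂ β)
  have hG : Integrable fun p => G p * (gaussianEnvelope p.1 * gaussianEnvelope p.2) :=
    ((integrable_abs_rpow_mul_gaussianEnvelope ha).mul_prod
      (integrable_abs_rpow_mul_gaussianEnvelope ha)).congr (ae_of_all _ fun p => by ring)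
  have hprod : ((∫ x : ℝ, ((|x| : ℝ) : ℂ) ^ β *
        (((Real.sqrt (2 * Real.pi))⁻¹ * Real.exp (-x ^ 2 / 2) : ℝ) : ℂ)) *
      ∫ y : ℝ, ((|y| : ℝ) : ℂ) ^ (starRingEnd ℂ β) *
        (((Real.sqrt (2 * Real.pi))⁻¹ * Real.exp (-y ^ 2 / 2) : ℝ) : ℂ)) =
      ∫ p, F p * bivariateNormalDensity 0 p := by
    rw [← integral_prod_mul, ← Measure.volume_eq_prod]
    congr 1 with p
    rw [bivariateNormalDensity_zero]
    push_cast
    ring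
  refine ⟨(∫ p, G p * (gaussianEnvelope p.1 * gaussianEnvelope p.2)) + 1,
    add_pos_of_nonneg_of_pos (integral_nonneg fun p => ?_) one_pos, fun ρ hρ => ?_⟩
  · simp only [G, gaussianEnvelope]; positivity
  rw [hprod]
  refine (norm_integral_mul_bivariateNormalDensity_sub_le hρ hF.aestronglyMeasurable
    (fun x y => by simp only [F, abs_neg]) hFG hG).trans ?_
  nlinarith [sq_nonneg ρ]

/-- Let `(U,V)` be a centered bivariate Gaussian vector with unit
variances and correlation `ρ`, `|ρ| ≤ 1/2`, expressed through its joint density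
`f_ρ (x,y) = (2π√(1−ρ²))⁻¹ exp(−(x²+y²−2ρxy)/(2(1−ρ²)))`, and let `β : ℂ` with
`Re β ∈ (−1/2, 0)`.  Then there is a constant `C` independent of `ρ` such that
`|cov(|U|^β, |V|^β̄)| ≤ C ρ²` for all `|ρ| ≤ 1/2`, where
`cov(|U|^β,|V|^β̄) = E(|U|^β |V|^β̄) − E|U|^β ⬝ E|V|^β̄` and the marginals have
standard normal density `φ`. -/
theorem stmt12 (β : ℂ) (h1 : -(1/2 : ℝ) < β.re) (h2 : β.re < 0) :
    ∃ C > (0:ℝ), ∀ ρ : ℝ, |ρ| ≤ 1/2 →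
      ‖(∫ p : ℝ × ℝ,
            ((|p.1| : ℝ) : ℂ) ^ β * ((|p.2| : ℝ) : ℂ) ^ (starRingEnd ℂ β) *
              (((2 * Real.pi * Real.sqrt (1 - ρ ^ 2))⁻¹ *
                Real.exp (-(p.1 ^ 2 + p.2 ^ 2 - 2 * ρ * p.1 * p.2) /
                  (2 * (1 - ρ ^ 2))) : ℝ) : ℂ))
        - (∫ x : ℝ, ((|x| : ℝ) : ℂ) ^ β *
              (((Real.sqrt (2 * Real.pi))⁻¹ * Real.exp (-x ^ 2 / 2) : ℝ) : ℂ)) *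
          (∫ y : ℝ, ((|y| : ℝ) : ℂ) ^ (starRingEnd ℂ β) *
              (((Real.sqrt (2 * Real.pi))⁻¹ * Real.exp (-y ^ 2 / 2) : ℝ) : ℂ))‖
        ≤ C * ρ ^ 2 :=
  stmt12_general β h1
end

section
/- Let X be a fractional Brownian motion with Hurst index H ∈ (0,1) and E X(1)² = 1, let a_0,...,a_K be real numbers with Σ a_k = 0 and Σ k a_k = 0, and set Δ_{p,1}X = Σ_{k=0}^K a_k X(k+p). Then there is a constant C such that for all integers k with |k| ≥ K, |cov(Δ_{k,1}X, Δ_{0,1}X)| ≤ C|k|^{2H−3}. -/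
/-!
By bilinearity the covariance at lag `k` is `-(1/2) ∑ᵢ ∑ⱼ aᵢ aⱼ |k + i - j|^{2H}`; the terms
`|s|^{2H}` and `|t|^{2H}` of the covariance cancel because `∑ aᵢ = 0`. Reflecting `j ↦ K - j`
rewrites the double sum as `∑ᵢ ∑ⱼ aᵢ a_{K-j} f(k - K + i + j)` with `f = |·|^{2H}`, and the
Gregory–Newton formula turns it into a combination of forward differences `Δ^{m+l} f (k - K)`
weighted by binomial moments of the two sequences. Both sequences have vanishing moments of
orders `0` and `1`, so only `m + l ≥ 4` survives, and by the mean value theorem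
`|Δⁿ f(y)| ≤ |(2H)(2H-1)⋯(2H-n+1)| y^{2H-n}`. This gives the bound, even with exponent `2H - 4`,
for `|k| ≥ 2K`; on the compact range `K ≤ |k| ≤ 2K` the double sum is continuous, hence bounded.
-/

open MeasureTheory ProbabilityTheory Finset

section FiniteDifference

lemma hasDerivAt_fwdDiff_iter {f f' : ℝ → ℝ} {y : ℝ} (hf : ∀ t ≥ y, HasDerivAt f (f' t) t)
    (n : ℕ) : ∀ t ≥ y, HasDerivAt ((fwdDiff 1)^[n] f) ((fwdDiff 1)^[n] f' t) t := by
  induction n with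
  | zero => exact hf
  | succ n ih =>
    intro t ht
    rw [Function.iterate_succ']
    exact ((ih (t + 1) (by linarith)).comp_add_const t 1).sub (ih t ht)

/-- `n` applications of the mean value theorem: `Δⁿ F₀ (y) = Fₙ (ξ)` for some `ξ ≥ y`. -/
lemma abs_fwdDiff_iter_le {F : ℕ → ℝ → ℝ} {M : ℝ} (n : ℕ) {y : ℝ}
    (hF : ∀ k < n, ∀ t ≥ y, HasDerivAt (F k) (F (k + 1) t) t) (hM : ∀ t ≥ y, |F n t| ≤ M) :
    |(fwdDiff 1)^[n] (F 0) y| ≤ M := by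
  induction n generalizing F y with
  | zero => exact hM y le_rfl
  | succ n ih =>
    have hG := hasDerivAt_fwdDiff_iter (hF 0 n.succ_pos) n
    obtain ⟨ξ, hξ, hslope⟩ := exists_hasDerivAt_eq_slope _ _ (lt_add_one y)
      (fun t ht => (hG t ht.1).continuousAt.continuousWithinAt)
      (fun t ht => hG t ht.1.le)
    have hΔ : (fwdDiff 1)^[n + 1] (F 0) y = (fwdDiff 1)^[n] (F 1) ξ := by
      rw [Function.iterate_succ_apply', hslope, add_sub_cancel_left, div_one]
      rfl
    rw [hΔ]
    exact ih (F := fun k => F (k + 1))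
      (fun k hk t ht => hF (k + 1) (by omega) t (hξ.1.trans_le ht).le)
      (fun t ht => hM t (hξ.1.trans_le ht).le)

lemma hasDerivAt_abs_rpow_of_pos {q t : ℝ} (ht : 0 < t) :
    HasDerivAt (fun s => |s| ^ q) (q * |t| ^ (q - 1)) t := by
  rw [abs_of_pos ht]
  refine (Real.hasDerivAt_rpow_const (Or.inl ht.ne')).congr_of_eventuallyEq ?_
  filter_upwards [eventually_gt_nhds ht] with s hs
  rw [abs_of_pos hs]

lemma abs_fwdDiff_iter_abs_rpow_le {p y : ℝ} {n : ℕ} (hy : 0 < y) (hn : p ≤ n) :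
    |(fwdDiff 1)^[n] (fun t => |t| ^ p) y| ≤ |(descPochhammer ℝ n).eval p| * y ^ (p - n) := by
  set F : ℕ → ℝ → ℝ := fun k t => (descPochhammer ℝ k).eval p * |t| ^ (p - k)
  have hF0 : F 0 = fun t => |t| ^ p := by simp [F]
  rw [← hF0]
  refine abs_fwdDiff_iter_le n (fun k _ t ht => ?_) (fun t ht => ?_)
  · have ht0 : 0 < t := hy.trans_le ht
    refine ((hasDerivAt_abs_rpow_of_pos (q := p - k) ht0).const_mul _).congr_deriv ?_
    simp only [F, descPochhammer_succ_eval, Nat.cast_succ, sub_sub]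
    ring
  · have ht0 : 0 < t := hy.trans_le ht
    rw [abs_mul, abs_of_nonneg (by positivity : 0 ≤ |t| ^ (p - n)), abs_of_pos ht0]
    exact mul_le_mul_of_nonneg_left (Real.rpow_le_rpow_of_nonpos hy ht (by linarith))
      (abs_nonneg _)

end FiniteDifference

section Newton

/-- The coefficient of `Δᵏ f (y)` in the Gregory–Newton expansion of `∑ⱼ aⱼ f (y + j)`. -/
def binomialMoment (a : ℕ → ℝ) (K k : ℕ) : ℝ := ∑ j ∈ range (K + 1), a j * j.choose k

lemma sum_mul_shift_eq_sum_binomialMoment_mul (a : ℕ → ℝ) (K : ℕ) (f : ℝ → ℝ) (y : ℝ) :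
    ∑ j ∈ range (K + 1), a j * f (y + j) =
      ∑ k ∈ range (K + 1), binomialMoment a K k * (fwdDiff 1)^[k] f y := by
  have hnewton : ∀ j ∈ range (K + 1),
      f (y + j) = ∑ k ∈ range (K + 1), j.choose k * (fwdDiff 1)^[k] f y := by
    intro j hj
    rw [← sum_subset (range_subset_range.2 (mem_range.1 hj))
      (fun k _ hk => by rw [Nat.choose_eq_zero_of_lt (by simpa using hk)]; simp)]
    simpa using shift_eq_sum_fwdDiff_iter 1 f j y
  rw [sum_congr rfl fun j hj => by rw [hnewton j hj]]
  simp only [binomialMoment, sum_mul, mul_sum]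
  rw [sum_comm]
  exact sum_congr rfl fun _ _ => sum_congr rfl fun _ _ => by ring

lemma sum_sum_mul_shift_eq_sum_sum_binomialMoment_mul (a b : ℕ → ℝ) (K : ℕ) (f : ℝ → ℝ)
    (y : ℝ) :
    ∑ i ∈ range (K + 1), ∑ j ∈ range (K + 1), a i * b j * f (y + i + j) =
      ∑ k ∈ range (K + 1), ∑ l ∈ range (K + 1),
        binomialMoment a K k * binomialMoment b K l * (fwdDiff 1)^[k + l] f y := by
  calc ∑ i ∈ range (K + 1), ∑ j ∈ range (K + 1), a i * b j * f (y + i + j)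
      = ∑ i ∈ range (K + 1), a i * ∑ l ∈ range (K + 1),
          binomialMoment b K l * (fwdDiff 1)^[l] f (y + i) := by
        refine sum_congr rfl fun i _ => ?_
        rw [← sum_mul_shift_eq_sum_binomialMoment_mul, mul_sum]
        exact sum_congr rfl fun _ _ => by ring
    _ = ∑ l ∈ range (K + 1), binomialMoment b K l *
          ∑ i ∈ range (K + 1), a i * (fwdDiff 1)^[l] f (y + i) := by
        simp only [mul_sum]
        rw [sum_comm]
        exact sum_congr rfl fun _ _ => sum_congr rfl fun _ _ => by ring
    _ = _ := by
        simp only [sum_mul_shift_eq_sum_binomialMoment_mul, mul_sum, ← Function.iterate_add_apply]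
        rw [sum_comm]
        exact sum_congr rfl fun _ _ => sum_congr rfl fun _ _ => by ring

end Newton

lemma exists_forall_ge_abs_le_mul_rpow {g : ℝ → ℝ} {a b C q : ℝ} (ha : 0 < a)
    (hg : ContinuousOn g (Set.Icc a b)) (hb : ∀ x ≥ b, |g x| ≤ C * x ^ q) :
    ∃ C', ∀ x ≥ a, |g x| ≤ C' * x ^ q := by
  have hpos : ∀ x ≥ a, 0 < x ^ q := fun x hx => Real.rpow_pos_of_pos (ha.trans_le hx) q
  have hcont : ContinuousOn (fun x => g x / x ^ q) (Set.Icc a b) :=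
    hg.div (fun x hx => (Real.continuousAt_rpow_const _ _
      (Or.inl (ha.trans_le hx.1).ne')).continuousWithinAt) fun x hx => (hpos x hx.1).ne'
  obtain ⟨M, hM⟩ := isCompact_Icc.exists_bound_of_continuousOn hcont
  refine ⟨max C M, fun x hx => ?_⟩
  rcases le_or_gt b x with hbx | hxb
  · exact (hb x hbx).trans (mul_le_mul_of_nonneg_right (le_max_left _ _) (hpos x hx).le)
  · have h := hM x ⟨hx, hxb.le⟩
    rw [Real.norm_eq_abs, abs_div, abs_of_pos (hpos x hx), div_le_iff₀ (hpos x hx)] at h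
    exact h.trans (mul_le_mul_of_nonneg_right (le_max_right _ _) (hpos x hx).le)

section FilteredAbsRpow

variable (a : ℕ → ℝ) (K : ℕ) (p : ℝ)

/-- `-(1/2) filteredAbsRpow a K (2H) k` is the covariance of the `a`-filtered increments of
fractional Brownian motion at lag `k`. -/
noncomputable def filteredAbsRpow (x : ℝ) : ℝ :=
  ∑ i ∈ range (K + 1), ∑ j ∈ range (K + 1), a i * a j * |x + i - j| ^ p

lemma filteredAbsRpow_neg (x : ℝ) : filteredAbsRpow a K p (-x) = filteredAbsRpow a K p x := by
  unfold filteredAbsRpow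
  rw [sum_comm]
  refine sum_congr rfl fun i _ => sum_congr rfl fun j _ => ?_
  rw [← abs_neg]
  ring_nf

lemma continuous_filteredAbsRpow (hp : 0 < p) : Continuous (filteredAbsRpow a K p) := by
  unfold filteredAbsRpow
  fun_prop (disch := positivity)

lemma filteredAbsRpow_eq_sum_sum_fwdDiff (x : ℝ) :
    filteredAbsRpow a K p x = ∑ k ∈ range (K + 1), ∑ l ∈ range (K + 1),
      binomialMoment a K k * binomialMoment (fun j => a (K - j)) K l *
        (fwdDiff 1)^[k + l] (fun t => |t| ^ p) (x - K) := by
  rw [← sum_sum_mul_shift_eq_sum_sum_binomialMoment_mul]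
  refine sum_congr rfl fun i _ => ?_
  conv_lhs => rw [← sum_range_reflect]
  refine sum_congr rfl fun j hj => ?_
  have hjK : j ≤ K := Nat.lt_succ_iff.1 (mem_range.1 hj)
  simp only [add_tsub_cancel_right, Nat.cast_sub hjK]
  ring_nf

variable {a K}

lemma binomialMoment_eq_zero_of_lt_two (ha0 : ∑ k ∈ range (K + 1), a k = 0)
    (ha1 : ∑ k ∈ range (K + 1), (k : ℝ) * a k = 0) {k : ℕ} (hk : k < 2) :
    binomialMoment a K k = 0 := by
  interval_cases k
  · simpa [binomialMoment] using ha0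
  · simpa [binomialMoment, mul_comm] using ha1

lemma binomialMoment_reflect_eq_zero_of_lt_two (ha0 : ∑ k ∈ range (K + 1), a k = 0)
    (ha1 : ∑ k ∈ range (K + 1), (k : ℝ) * a k = 0) {k : ℕ} (hk : k < 2) :
    binomialMoment (fun j => a (K - j)) K k = 0 := by
  have hreflect (f : ℕ → ℝ) : ∑ j ∈ range (K + 1), f (K - j) = ∑ j ∈ range (K + 1), f j := by
    simpa using sum_range_reflect f (K + 1)
  refine binomialMoment_eq_zero_of_lt_two (by rwa [hreflect a]) ?_ hk
  rw [← hreflect]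
  calc ∑ j ∈ range (K + 1), ((K - j : ℕ) : ℝ) * a (K - (K - j))
      = ∑ j ∈ range (K + 1), ((K : ℝ) * a j - j * a j) :=
        sum_congr rfl fun j hj => by
          have hjK : j ≤ K := Nat.lt_succ_iff.1 (mem_range.1 hj)
          rw [Nat.cast_sub hjK, Nat.sub_sub_self hjK]
          ring
    _ = 0 := by rw [sum_sub_distrib, ← mul_sum, ha0, ha1]; ring

end FilteredAbsRpow

section FilteredAbsRpowBound

variable {a : ℕ → ℝ} {K : ℕ} {p : ℝ}

/-- Both `a` and its reflection have vanishing moments of orders `0` and `1`, so only differences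
of order at least `4` survive in `filteredAbsRpow_eq_sum_sum_fwdDiff`. -/
lemma abs_filteredAbsRpow_le (ha0 : ∑ k ∈ range (K + 1), a k = 0)
    (ha1 : ∑ k ∈ range (K + 1), (k : ℝ) * a k = 0) (hp : p ≤ 4) {x : ℝ} (hx : K + 1 ≤ x) :
    |filteredAbsRpow a K p x| ≤
      (∑ k ∈ range (K + 1), ∑ l ∈ range (K + 1), |binomialMoment a K k *
        binomialMoment (fun j => a (K - j)) K l * (descPochhammer ℝ (k + l)).eval p|) *
        (x - K) ^ (p - 4) := by
  have hy : 1 ≤ x - K := by linarith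
  rw [filteredAbsRpow_eq_sum_sum_fwdDiff, sum_mul]
  refine (abs_sum_le_sum_abs _ _).trans (sum_le_sum fun k _ => ?_)
  rw [sum_mul]
  refine (abs_sum_le_sum_abs _ _).trans (sum_le_sum fun l _ => ?_)
  by_cases hkl : k < 2 ∨ l < 2
  · rcases hkl with hk | hl
    · simp [binomialMoment_eq_zero_of_lt_two ha0 ha1 hk]
    · simp [binomialMoment_reflect_eq_zero_of_lt_two ha0 ha1 hl]
  have h4 : (4 : ℝ) ≤ (k + l : ℕ) := by exact_mod_cast (by omega : 4 ≤ k + l)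
  rw [abs_mul, abs_mul _ (Polynomial.eval _ _), mul_assoc]
  refine mul_le_mul_of_nonneg_left ?_ (abs_nonneg _)
  calc _ ≤ |(descPochhammer ℝ (k + l)).eval p| * (x - K) ^ (p - (k + l : ℕ)) :=
        abs_fwdDiff_iter_abs_rpow_le (by linarith) (by linarith)
    _ ≤ |(descPochhammer ℝ (k + l)).eval p| * (x - K) ^ (p - 4) :=
        mul_le_mul_of_nonneg_left (Real.rpow_le_rpow_of_exponent_le hy (by linarith))
          (abs_nonneg _)

lemma exists_abs_filteredAbsRpow_le (ha0 : ∑ k ∈ range (K + 1), a k = 0)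
    (ha1 : ∑ k ∈ range (K + 1), (k : ℝ) * a k = 0) (hp0 : 0 < p) (hp : p ≤ 3) :
    ∃ C, ∀ x ≥ (K : ℝ), |filteredAbsRpow a K p x| ≤ C * x ^ (p - 3) := by
  rcases Nat.eq_zero_or_pos K with rfl | hK
  · have ha : a 0 = 0 := by simpa using ha0
    exact ⟨0, fun x _ => by simp [filteredAbsRpow, ha]⟩
  have hK1 : (1 : ℝ) ≤ K := by exact_mod_cast hK
  obtain ⟨C, hC⟩ : ∃ C, ∀ x ≥ 2 * (K : ℝ), |filteredAbsRpow a K p x| ≤ C * x ^ (p - 3) := by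
    set B := ∑ k ∈ range (K + 1), ∑ l ∈ range (K + 1), |binomialMoment a K k *
        binomialMoment (fun j => a (K - j)) K l * (descPochhammer ℝ (k + l)).eval p|
    have hB : 0 ≤ B := sum_nonneg fun _ _ => sum_nonneg fun _ _ => abs_nonneg _
    refine ⟨B / 2 ^ (p - 4), fun x hx =>
      (abs_filteredAbsRpow_le ha0 ha1 (by linarith) (by linarith)).trans ?_⟩
    calc B * (x - K) ^ (p - 4) ≤ B * (x / 2) ^ (p - 4) :=
          mul_le_mul_of_nonneg_left
            (Real.rpow_le_rpow_of_nonpos (by linarith) (by linarith) (by linarith)) hB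
      _ = B / 2 ^ (p - 4) * x ^ (p - 4) := by
          rw [Real.div_rpow (by linarith) zero_le_two]
          ring
      _ ≤ B / 2 ^ (p - 4) * x ^ (p - 3) :=
          mul_le_mul_of_nonneg_left (Real.rpow_le_rpow_of_exponent_le (by linarith)
            (by linarith)) (by positivity)
  exact exists_forall_ge_abs_le_mul_rpow (by positivity)
    (continuous_filteredAbsRpow a K p hp0).continuousOn hC

end FilteredAbsRpowBound

lemma sum_sum_mul_mul_add_sub_div_two {ι : Type*} (s : Finset ι) {a : ι → ℝ} (u v : ι → ℝ)
    (w : ι → ι → ℝ) (ha : ∑ i ∈ s, a i = 0) :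
    ∑ i ∈ s, ∑ j ∈ s, a i * a j * ((u i + v j - w i j) / 2) =
      -(1 / 2) * ∑ i ∈ s, ∑ j ∈ s, a i * a j * w i j := by
  have hu : ∑ i ∈ s, ∑ j ∈ s, a i * a j * u i = 0 := by
    simp only [← sum_mul, ← mul_sum, ha, mul_zero, zero_mul, sum_const_zero]
  have hv : ∑ i ∈ s, ∑ j ∈ s, a i * a j * v j = 0 := by
    simp only [mul_assoc, ← mul_sum, ← sum_mul, ha, zero_mul]
  calc _ = (1 / 2) * (∑ i ∈ s, ∑ j ∈ s, a i * a j * u i + ∑ i ∈ s, ∑ j ∈ s, a i * a j * v j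
        - ∑ i ∈ s, ∑ j ∈ s, a i * a j * w i j) := by
        simp only [mul_sum, ← sum_add_distrib, ← sum_sub_distrib]
        exact sum_congr rfl fun _ _ => sum_congr rfl fun _ _ => by ring
    _ = _ := by rw [hu, hv]; ring

section Covariance

variable {Ω : Type*} [MeasurableSpace Ω] {μ : Measure Ω}

lemma integrable_of_integrable_mul_self [IsFiniteMeasure μ] {f : Ω → ℝ}
    (hf : AEStronglyMeasurable f μ) (h : Integrable (fun ω => f ω * f ω) μ) : Integrable f μ :=
  ((memLp_two_iff_integrable_sq hf).2 (by simpa only [sq] using h)).integrable one_le_two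

lemma integral_sum_mul_sum {ι κ : Type*} (s : Finset ι) (t : Finset κ) (a : ι → ℝ) (b : κ → ℝ)
    {Y : ι → Ω → ℝ} {Z : κ → Ω → ℝ} (h : ∀ i j, Integrable (fun ω => Y i ω * Z j ω) μ) :
    ∫ ω, (∑ i ∈ s, a i * Y i ω) * (∑ j ∈ t, b j * Z j ω) ∂μ =
      ∑ i ∈ s, ∑ j ∈ t, a i * b j * ∫ ω, Y i ω * Z j ω ∂μ := by
  calc _ = ∫ ω, ∑ i ∈ s, ∑ j ∈ t, a i * b j * (Y i ω * Z j ω) ∂μ := by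
        congr with ω
        rw [sum_mul_sum]
        exact sum_congr rfl fun _ _ => sum_congr rfl fun _ _ => by ring
    _ = _ := by
        rw [integral_finsetSum _ fun i _ => integrable_finsetSum _ fun j _ => (h i j).const_mul _]
        exact sum_congr rfl fun i _ => by
          rw [integral_finsetSum _ fun j _ => (h i j).const_mul _]
          exact sum_congr rfl fun j _ => integral_const_mul _ _

end Covariance

/-- Let `X` be a fractional Brownian motion with Hurst index
`H ∈ (0,1)` and `E X(1)² = 1` (centered, with covariance
`E X(t)X(s) = (|s|^{2H}+|t|^{2H}−|s−t|^{2H})/2`).  Let `a_0,…,a_K` satisfy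
`∑ a_k = 0`, `∑ k a_k = 0`, and set `Δ_{p,1}X = ∑_k a_k X(k+p)`.  Then there is a
constant `C` such that for every integer `k` with `|k| ≥ K`,
`|cov(Δ_{k,1}X, Δ_{0,1}X)| ≤ C |k|^{2H−3}`. -/
theorem stmt13 {Ω : Type*} [MeasureSpace Ω] [IsProbabilityMeasure (ℙ : Measure Ω)]
    (H : ℝ) (hH0 : 0 < H) (hH1 : H < 1)
    (X : ℝ → Ω → ℝ) (hmeas : ∀ t, Measurable (X t))
    (hmean : ∀ t, ∫ ω, X t ω = 0)
    (hint : ∀ s t, Integrable (fun ω => X s ω * X t ω))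
    (hcov : ∀ s t : ℝ, ∫ ω, X s ω * X t ω
      = (|s| ^ (2 * H) + |t| ^ (2 * H) - |s - t| ^ (2 * H)) / 2)
    (K : ℕ) (a : ℕ → ℝ)
    (ha0 : ∑ k ∈ Finset.range (K + 1), a k = 0)
    (ha1 : ∑ k ∈ Finset.range (K + 1), (k : ℝ) * a k = 0)
    (Δ : ℤ → Ω → ℝ)
    (hΔ : ∀ k ω, Δ k ω = ∑ j ∈ Finset.range (K + 1), a j * X ((j : ℝ) + (k : ℝ)) ω) :
    ∃ C : ℝ, ∀ k : ℤ, (K : ℤ) ≤ |k| →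
      |(∫ ω, Δ k ω * Δ 0 ω) - (∫ ω, Δ k ω) * (∫ ω, Δ 0 ω)|
        ≤ C * |(k : ℝ)| ^ (2 * H - 3) := by
  have hX : ∀ t, Integrable (X t) := fun t =>
    integrable_of_integrable_mul_self (hmeas t).aestronglyMeasurable (hint t t)
  have hΔmean : ∀ k, ∫ ω, Δ k ω = 0 := fun k => by
    simp_rw [hΔ]
    rw [integral_finsetSum _ fun j _ => (hX _).const_mul _]
    simp [integral_const_mul, hmean]
  have hΔcov : ∀ k : ℤ, ∫ ω, Δ k ω * Δ 0 ω = -(1 / 2) * filteredAbsRpow a K (2 * H) k := by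
    intro k
    simp_rw [hΔ]
    rw [integral_sum_mul_sum _ _ _ _ fun _ _ => hint _ _]
    simp_rw [hcov]
    rw [sum_sum_mul_mul_add_sub_div_two _ _ _ _ ha0]
    simp only [filteredAbsRpow, Int.cast_zero, add_zero, add_comm (k : ℝ)]
  obtain ⟨C, hC⟩ := exists_abs_filteredAbsRpow_le ha0 ha1 (p := 2 * H) (by linarith) (by linarith)
  refine ⟨C / 2, fun k hk => ?_⟩
  have hsymm : filteredAbsRpow a K (2 * H) k = filteredAbsRpow a K (2 * H) |(k : ℝ)| := by
    rcases abs_choice (k : ℝ) with h | h <;> rw [h]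
    rw [filteredAbsRpow_neg]
  rw [hΔcov, hΔmean, zero_mul, sub_zero, hsymm, abs_mul]
  have := hC |(k : ℝ)| (by rw [← Int.cast_abs]; exact_mod_cast hk)
  rw [abs_neg, abs_of_pos one_half_pos]
  linarith
end
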